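/- arXiv:1406.4008 — 5 statements merged into one kernel-verified Lean document; each statement's English description precedes it below -/
import Mathlib

section
/- Let C ⊆ X be a nonempty closed convex set in a Hilbert space X, x ∈ X, λ ∈ [0,2], and define R(x) = x + λ(P_C(x) - x), where P_C is the metric projection onto C. Then for every c ∈ C, ‖R(x) - c‖² ≤ ‖x - c‖² - λ(2-λ)·d(x,C)². -/
/-! Expanding `x + λ(p - x) - c = (1 - λ)(x - p) - (c - p)` gives the exact identity
`‖R x - c‖² = ‖x - c‖² - λ(2 - λ)‖x - p‖² + 2λ⟪x - p, c - p⟫`, and the last term is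
nonpositive by the variational characterization of the nearest point `p = P_C x`. -/

open RealInnerProductSpace

theorem Metric.infDist_eq_norm_sub_of_forall_norm_sub_le {E : Type*} [SeminormedAddCommGroup E]
    {C : Set E} {x p : E} (hp : p ∈ C)
    (hmin : ∀ y ∈ C, ‖x - p‖ ≤ ‖x - y‖) : Metric.infDist x C = ‖x - p‖ :=
  le_antisymm (by simpa [dist_eq_norm] using Metric.infDist_le_dist_of_mem hp)
    ((Metric.le_infDist ⟨p, hp⟩).2 fun y hy => by simpa [dist_eq_norm] using hmin y hy)

theorem real_inner_sub_le_zero_of_forall_norm_sub_le {X : Type*} [NormedAddCommGroup X]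
    [InnerProductSpace ℝ X] {C : Set X} {x p : X} (hC : Convex ℝ C) (hp : p ∈ C)
    (hmin : ∀ y ∈ C, ‖x - p‖ ≤ ‖x - y‖) {c : X} (hc : c ∈ C) : ⟪x - p, c - p⟫ ≤ 0 := by
  refine (norm_eq_iInf_iff_real_inner_le_zero hC hp).1 ?_ c hc
  simpa only [Metric.infDist_eq_iInf, dist_eq_norm] using
    (Metric.infDist_eq_norm_sub_of_forall_norm_sub_le hp hmin).symm

theorem norm_add_smul_sub_sub_sq {X : Type*} [NormedAddCommGroup X] [InnerProductSpace ℝ X]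
    (x p c : X) (lam : ℝ) :
    ‖x + lam • (p - x) - c‖ ^ 2 =
      ‖x - c‖ ^ 2 - lam * (2 - lam) * ‖x - p‖ ^ 2 + 2 * lam * ⟪x - p, c - p⟫ := by
  have hR : x + lam • (p - x) - c = (1 - lam) • (x - p) - (c - p) := by module
  have hx : x - c = (x - p) - (c - p) := by abel
  rw [hR, hx, norm_sub_sq_real _ (c - p), norm_sub_sq_real (x - p), norm_smul,
    real_inner_smul_left, mul_pow, Real.norm_eq_abs, sq_abs]
  ring

theorem fejer_attraction_general
    {X : Type*} [NormedAddCommGroup X] [InnerProductSpace ℝ X]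
    (C : Set X) (hconv : Convex ℝ C)
    (x p : X) (hpC : p ∈ C) (hproj : ∀ y ∈ C, ‖x - p‖ ≤ ‖x - y‖)
    (lam : ℝ) (hlam : lam ∈ Set.Icc (0:ℝ) 2) :
    ∀ c ∈ C,
      ‖(x + lam • (p - x)) - c‖ ^ 2 ≤
        ‖x - c‖ ^ 2 - lam * (2 - lam) * (Metric.infDist x C) ^ 2 := by
  intro c hc
  have hinner := real_inner_sub_le_zero_of_forall_norm_sub_le hconv hpC hproj hc
  rw [norm_add_smul_sub_sub_sq, Metric.infDist_eq_norm_sub_of_forall_norm_sub_le hpC hproj]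
  linarith [mul_nonpos_of_nonneg_of_nonpos hlam.1 hinner]

/-- Fejér attraction property of the relaxation operator. -/
theorem fejer_attraction
    {X : Type*} [NormedAddCommGroup X] [InnerProductSpace ℝ X] [CompleteSpace X]
    (C : Set X) (hC : C.Nonempty) (hclosed : IsClosed C) (hconv : Convex ℝ C)
    (x p : X) (hpC : p ∈ C) (hproj : ∀ y ∈ C, ‖x - p‖ ≤ ‖x - y‖)
    (lam : ℝ) (hlam : lam ∈ Set.Icc (0:ℝ) 2) :
    ∀ c ∈ C,
      ‖(x + lam • (p - x)) - c‖ ^ 2 ≤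
        ‖x - c‖ ^ 2 - lam * (2 - lam) * (Metric.infDist x C) ^ 2 :=
  fejer_attraction_general C hconv x p hpC hproj lam hlam
end

section
/- Let C ⊆ ℝⁿ be a closed convex set and x̄ ∈ C. Then for every ε > 0 there exists δ > 0 such that for every point x ∈ (B(x̄,δ) ∩ C) \ {x̄} and every unit vector v ∈ N_C(x), one has 0 ≤ -⟨v, x̄ - x⟩ ≤ ε‖x̄ - x‖. -/
/-!
Unit normal vectors at points `x` near `x̄` lie close to the normal cone at `x̄`: the graph of the
normal cone map is closed and the unit sphere is compact. If `v ∈ N_C(x)` is a unit vector and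
`w ∈ N_C(x̄)` satisfies `‖v - w‖ < ε`, then
`⟪v, x - x̄⟫ = ⟪v - w, x - x̄⟫ + ⟪w, x - x̄⟫ ≤ ε ‖x - x̄‖`, while `x̄ ∈ C` gives `0 ≤ ⟪v, x - x̄⟫`.
-/

open RealInnerProductSpace Filter Topology

/-- The normal cone of a convex set `C` at `x`. -/
def normalCone {n : ℕ} (C : Set (EuclideanSpace ℝ (Fin n))) (x : EuclideanSpace ℝ (Fin n)) :
    Set (EuclideanSpace ℝ (Fin n)) :=
  {v | ∀ y ∈ C, ⟪v, y - x⟫ ≤ 0}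

section NormalCone

variable {n : ℕ} (C : Set (EuclideanSpace ℝ (Fin n)))

theorem isClosed_setOf_mem_normalCone :
    IsClosed {p : EuclideanSpace ℝ (Fin n) × EuclideanSpace ℝ (Fin n) |
      p.2 ∈ normalCone C p.1} := by
  have hgraph : {p : EuclideanSpace ℝ (Fin n) × EuclideanSpace ℝ (Fin n) |
      p.2 ∈ normalCone C p.1} = ⋂ y ∈ C, {p | ⟪p.2, y - p.1⟫ ≤ 0} := by
    ext p; simp [normalCone]
  rw [hgraph]
  exact isClosed_biInter fun y _ => isClosed_le (by fun_prop) continuous_const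

theorem eventually_forall_unit_mem_normalCone_exists_near (xbar : EuclideanSpace ℝ (Fin n))
    {ε : ℝ} (hε : 0 < ε) :
    ∀ᶠ x in 𝓝 xbar, ∀ v ∈ normalCone C x, ‖v‖ = 1 →
      ∃ w ∈ normalCone C xbar, ‖v - w‖ < ε := by
  set K := Metric.sphere (0 : EuclideanSpace ℝ (Fin n)) 1 ∩
    {v | ∀ w ∈ normalCone C xbar, ε ≤ ‖v - w‖}
  have hK : IsCompact K := (isCompact_sphere 0 1).inter_right <| by
    simp only [Set.ofPred_forall]
    exact isClosed_biInter fun w _ => isClosed_le continuous_const (by fun_prop)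
  have hfar : ∀ᶠ x in 𝓝 xbar, ∀ v ∈ K, v ∉ normalCone C x := by
    refine hK.eventually_forall_of_forall_eventually fun v hv => ?_
    have hv_not : v ∉ normalCone C xbar := fun hvN => by
      simpa using (hv.2 v hvN).trans_lt' hε
    exact (isClosed_setOf_mem_normalCone C).isOpen_compl.mem_nhds hv_not
  filter_upwards [hfar] with x hx v hv hv1
  by_contra! hnear
  exact hx v ⟨by simpa using hv1, hnear⟩ hv

variable {C}

theorem inner_le_norm_sub_mul_of_mem_normalCone {xbar x w : EuclideanSpace ℝ (Fin n)}
    (hw : w ∈ normalCone C xbar) (hx : x ∈ C) (v : EuclideanSpace ℝ (Fin n)) :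
    ⟪v, x - xbar⟫ ≤ ‖v - w‖ * ‖x - xbar‖ :=
  calc ⟪v, x - xbar⟫ = ⟪v - w, x - xbar⟫ + ⟪w, x - xbar⟫ := by rw [inner_sub_left]; ring
    _ ≤ ‖v - w‖ * ‖x - xbar‖ + 0 := add_le_add (real_inner_le_norm _ _) (hw x hx)
    _ = ‖v - w‖ * ‖x - xbar‖ := add_zero _

end NormalCone

theorem supporting_hyperplane_near_point_general
    {n : ℕ} (C : Set (EuclideanSpace ℝ (Fin n)))
    (xbar : EuclideanSpace ℝ (Fin n)) (hxbar : xbar ∈ C) :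
    ∀ ε > (0:ℝ), ∃ δ > (0:ℝ),
      ∀ x ∈ (Metric.closedBall xbar δ ∩ C) \ {xbar},
        ∀ v ∈ normalCone C x, ‖v‖ = 1 →
          0 ≤ -⟪v, xbar - x⟫ ∧ -⟪v, xbar - x⟫ ≤ ε * ‖xbar - x‖ := by
  intro ε hε
  obtain ⟨δ, hδ, hnear⟩ := Metric.nhds_basis_closedBall.eventually_iff.1
    (eventually_forall_unit_mem_normalCone_exists_near C xbar hε)
  refine ⟨δ, hδ, fun x ⟨⟨hxδ, hxC⟩, _⟩ v hv hv1 => ?_⟩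
  obtain ⟨w, hw, hvw⟩ := hnear hxδ v hv hv1
  have hflip : -⟪v, xbar - x⟫ = ⟪v, x - xbar⟫ := by rw [← inner_neg_right, neg_sub]
  rw [hflip, norm_sub_rev]
  refine ⟨by linarith [hv xbar hxbar], ?_⟩
  calc ⟪v, x - xbar⟫ ≤ ‖v - w‖ * ‖x - xbar‖ :=
        inner_le_norm_sub_mul_of_mem_normalCone hw hxC v
    _ ≤ ε * ‖x - xbar‖ := by gcongr

/-- Supporting hyperplanes near a point: first order estimate. -/
theorem supporting_hyperplane_near_point
    {n : ℕ} (C : Set (EuclideanSpace ℝ (Fin n)))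
    (hclosed : IsClosed C) (hconv : Convex ℝ C)
    (xbar : EuclideanSpace ℝ (Fin n)) (hxbar : xbar ∈ C) :
    ∀ ε > (0:ℝ), ∃ δ > (0:ℝ),
      ∀ x ∈ (Metric.closedBall xbar δ ∩ C) \ {xbar},
        ∀ v ∈ normalCone C x, ‖v‖ = 1 →
          0 ≤ -⟪v, xbar - x⟫ ∧ -⟪v, xbar - x⟫ ≤ ε * ‖xbar - x‖ :=
  supporting_hyperplane_near_point_general C xbar hxbar
end

section
/- Let f: ℝⁿ → ℝ be a convex function that is twice continuously differentiable in a neighborhood of x̄, with f(x̄) = 0 and ∇f(x̄) ≠ 0, and let C = {x : f(x) ≤ 0}. Then C has the second order supporting hyperplane property at x̄: there exist δ > 0 and M > 0 such that for every x ∈ (B(x̄,δ) ∩ C) \ {x̄} and every unit vector v ∈ N_C(x), one has 0 ≤ -⟨v, x̄ - x⟩ ≤ M‖x̄ - x‖². -/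
/-!
At a point `x` of `C = {f ≤ 0}` near `x̄` the gradient `∇f(x)` is close to `∇f(x̄) ≠ 0`, and since
`f` decreases strictly along every direction `u` with `⟪∇f(x), u⟫ < 0`, a unit normal `v` to `C`
at `x` must be `∇f(x) / ‖∇f(x)‖`. Convexity at `x̄` gives `⟪∇f(x̄), x - x̄⟫ ≤ f x - f x̄ ≤ 0`,
and since `∇f` is differentiable at `x̄`, `‖∇f(x) - ∇f(x̄)‖ ≤ K ‖x - x̄‖`. Hence
`⟪v, x - x̄⟫ ≤ K ‖x - x̄‖² / ‖∇f(x)‖ ≤ (2K / ‖∇f(x̄)‖) ‖x - x̄‖²`.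
-/

open RealInnerProductSpace

open Filter Topology InnerProductSpace AffineMap

theorem HasDerivAt.exists_pos_lt_of_neg {h : ℝ → ℝ} {a d : ℝ} (hd : HasDerivAt h d a)
    (hneg : d < 0) : ∃ t > 0, h (a + t) < h a := by
  have hslope : ∀ᶠ t in 𝓝[>] (0 : ℝ), t⁻¹ • (h (a + t) - h a) < 0 :=
    hd.tendsto_slope_zero_right (Iio_mem_nhds hneg)
  obtain ⟨t, ht, hlt⟩ :=
    ((eventually_mem_nhdsWithin (a := (0 : ℝ)) (s := Set.Ioi 0)).and hslope).exists
  exact ⟨t, ht, by simpa [smul_eq_mul, inv_mul_lt_iff₀ (show (0 : ℝ) < t from ht)] using hlt⟩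

section InnerProductSpace

variable {E : Type*} [NormedAddCommGroup E] [InnerProductSpace ℝ E]

theorem exists_nonneg_smul_of_inner_nonpos {g v : E} (hg : g ≠ 0)
    (h : ∀ u, ⟪g, u⟫ < 0 → ⟪v, u⟫ ≤ 0) : ∃ a ≥ (0 : ℝ), v = a • g := by
  have hg2 : 0 < ‖g‖ ^ 2 := by positivity
  have hvg : 0 ≤ ⟪v, g⟫ := by
    simpa using h (-g) (by simpa [real_inner_self_eq_norm_sq] using hg2)
  set a := ⟪v, g⟫ / ‖g‖ ^ 2
  set r := v - a • g
  have hgr : ⟪g, r⟫ = 0 := by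
    simp only [r, a, inner_sub_right, real_inner_smul_right, real_inner_self_eq_norm_sq,
      real_inner_comm g v]
    field_simp
    ring
  have hvr : ⟪v, r⟫ = ‖r‖ ^ 2 := by
    rw [← real_inner_self_eq_norm_sq]
    conv_lhs => rw [show v = r + a • g by simp [r]]
    rw [inner_add_left, real_inner_smul_left, hgr, mul_zero, add_zero]
  -- each `t • r - g` lies in the open half-space `⟪g, ·⟫ < 0`
  have hbound : ∀ t : ℝ, t * ‖r‖ ^ 2 ≤ ⟪v, g⟫ := by
    intro t
    have := h (t • r - g) (by
      rw [inner_sub_right, real_inner_smul_right, hgr, real_inner_self_eq_norm_sq]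
      linarith)
    rw [inner_sub_right, real_inner_smul_right, hvr] at this
    linarith
  have hr : r = 0 := by
    by_contra hr
    have := hbound ((⟪v, g⟫ + 1) / ‖r‖ ^ 2)
    rw [div_mul_cancel₀ _ (by positivity)] at this
    linarith
  exact ⟨a, by positivity, sub_eq_zero.mp hr⟩

variable [CompleteSpace E] {f : E → ℝ} {g v x : E}

theorem HasGradientAt.hasDerivAt_comp_lineMap (hf : HasGradientAt f g x) (y : E) :
    HasDerivAt (f ∘ lineMap (k := ℝ) x y) ⟪g, y - x⟫ 0 := by
  have hf' : HasFDerivAt f (toDual ℝ E g) (lineMap x y (0 : ℝ)) := by simpa using hf.hasFDerivAt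
  exact hf'.comp_hasDerivAt (0 : ℝ) hasDerivAt_lineMap

theorem ConvexOn.inner_gradient_le (hconv : ConvexOn ℝ Set.univ f) (hf : HasGradientAt f g x)
    (y : E) : ⟪g, y - x⟫ ≤ f y - f x := by
  simpa [slope_def_field] using (hconv.comp_affineMap (lineMap (k := ℝ) x y)).le_slope_of_hasDerivAt
    (Set.mem_univ 0) (Set.mem_univ 1) one_pos (HasGradientAt.hasDerivAt_comp_lineMap hf y)

theorem inner_nonpos_of_inner_gradient_neg (hf : HasGradientAt f g x)
    (hv : ∀ y, f y ≤ f x → ⟪v, y - x⟫ ≤ 0) {u : E} (hu : ⟪g, u⟫ < 0) : ⟪v, u⟫ ≤ 0 := by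
  obtain ⟨t, ht, hlt⟩ := (HasGradientAt.hasDerivAt_comp_lineMap hf (x + u)).exists_pos_lt_of_neg
    (by simpa using hu)
  have := hv _ (by simpa using hlt.le)
  rw [lineMap_apply_module', add_sub_cancel_right, add_sub_cancel_left, real_inner_smul_right]
    at this
  exact nonpos_of_mul_nonpos_right this ht

theorem eq_inv_norm_smul_of_unit_normal_sublevel (hf : HasGradientAt f g x) (hg : g ≠ 0)
    (hv : ∀ y, f y ≤ f x → ⟪v, y - x⟫ ≤ 0) (hv1 : ‖v‖ = 1) : v = ‖g‖⁻¹ • g := by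
  obtain ⟨a, ha, rfl⟩ :=
    exists_nonneg_smul_of_inner_nonpos hg fun _ ↦ inner_nonpos_of_inner_gradient_neg hf hv
  rw [norm_smul, Real.norm_of_nonneg ha] at hv1
  rw [eq_inv_of_mul_eq_one_left hv1]

theorem ConvexOn.inner_sub_le_mul_norm_sq {x₀ g₀ : E} {K : ℝ} (hconv : ConvexOn ℝ Set.univ f)
    (hf : HasGradientAt f g₀ x₀) (hfx : f x ≤ f x₀) (hg : ‖g - g₀‖ ≤ K * ‖x - x₀‖) :
    ⟪g, x - x₀⟫ ≤ K * ‖x - x₀‖ ^ 2 := calc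
  ⟪g, x - x₀⟫ = ⟪g - g₀, x - x₀⟫ + ⟪g₀, x - x₀⟫ := by rw [inner_sub_left]; ring
  _ ≤ ‖g - g₀‖ * ‖x - x₀‖ + 0 :=
    add_le_add (real_inner_le_norm _ _) ((hconv.inner_gradient_le hf x).trans (by linarith))
  _ ≤ K * ‖x - x₀‖ ^ 2 := by nlinarith [norm_nonneg (x - x₀)]

theorem ContDiffAt.differentiableAt_gradient (hf : ContDiffAt ℝ 2 f x) :
    DifferentiableAt ℝ (gradient f) x :=
  (toDual ℝ E).symm.comp_differentiableAt_iff.mpr <|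
    (hf.fderiv_right (m := 1) (by norm_num)).differentiableAt one_ne_zero

end InnerProductSpace

/-- Smoothness implies the second order supporting hyperplane (SOSH) property. -/
theorem smooth_implies_SOSH
    {n : ℕ} (f : EuclideanSpace ℝ (Fin n) → ℝ)
    (hconv : ConvexOn ℝ Set.univ f)
    (xbar : EuclideanSpace ℝ (Fin n))
    (hsmooth : ContDiffAt ℝ 2 f xbar)
    (hf0 : f xbar = 0) (hgrad : gradient f xbar ≠ 0) :
    ∃ δ > (0:ℝ), ∃ M > (0:ℝ),
      ∀ x ∈ (Metric.closedBall xbar δ ∩ {x | f x ≤ 0}) \ {xbar},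
        ∀ v ∈ normalCone {x | f x ≤ 0} x, ‖v‖ = 1 →
          0 ≤ -⟪v, xbar - x⟫ ∧ -⟪v, xbar - x⟫ ≤ M * ‖xbar - x‖ ^ 2 := by
  set g₀ := gradient f xbar
  have hg₀ : 0 < ‖g₀‖ := norm_pos_iff.mpr hgrad
  have hdiff := hsmooth.differentiableAt_gradient
  obtain ⟨K, hK, hKbound⟩ := hdiff.isBigO_sub.exists_pos
  have hnear : ∀ᶠ y in 𝓝 xbar, DifferentiableAt ℝ f y ∧
      ‖gradient f y - g₀‖ ≤ K * ‖y - xbar‖ ∧ ‖g₀‖ / 2 < ‖gradient f y‖ :=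
    ((hsmooth.eventually (by simp)).mono fun _ hy ↦ hy.differentiableAt two_ne_zero).and <|
      hKbound.bound.and <| hdiff.continuousAt.norm.eventually (lt_mem_nhds (half_lt_self hg₀))
  obtain ⟨δ, hδ, hball⟩ := Metric.nhds_basis_closedBall.eventually_iff.mp hnear
  refine ⟨δ, hδ, 2 * K / ‖g₀‖, by positivity, ?_⟩
  rintro x ⟨⟨hxδ, hx0⟩, -⟩ v hv hv1
  obtain ⟨hfx, hgx, hgx_large⟩ := hball hxδ
  have hgx_pos : 0 < ‖gradient f x‖ := (half_pos hg₀).trans hgx_large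
  have hv_eq := eq_inv_norm_smul_of_unit_normal_sublevel hfx.hasGradientAt
    (norm_pos_iff.mp hgx_pos) (fun y hy ↦ hv y (hy.trans hx0)) hv1
  have hquad := hconv.inner_sub_le_mul_norm_sq (hsmooth.differentiableAt two_ne_zero).hasGradientAt
    (hx0.trans hf0.ge) hgx
  refine ⟨by simpa using hv xbar hf0.le, ?_⟩
  calc -⟪v, xbar - x⟫ = ⟪gradient f x, x - xbar⟫ / ‖gradient f x‖ := by
        rw [hv_eq, ← inner_neg_right, neg_sub, real_inner_smul_left, inv_mul_eq_div]
    _ ≤ K * ‖x - xbar‖ ^ 2 / (‖g₀‖ / 2) :=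
        div_le_div₀ (by positivity) hquad (by positivity) hgx_large.le
    _ = 2 * K / ‖g₀‖ * ‖xbar - x‖ ^ 2 := by rw [norm_sub_rev]; field_simp
end

section
/- Let K_1, …, K_r ⊆ ℝⁿ be closed convex sets, each SOSH at a common point x̄ ∈ K := ∩_{l=1}^r K_l. Suppose the constraint qualification holds at x̄: if v_l ∈ N_{K_l}(x̄) for each l and Σ_{l=1}^r v_l = 0, then v_l = 0 for all l. Then K is SOSH at x̄. -/
open RealInnerProductSpace

/-- The second order supporting hyperplane (SOSH) property of `C` at `x̄`. -/
def SOSH {n : ℕ} (C : Set (EuclideanSpace ℝ (Fin n))) (xbar : EuclideanSpace ℝ (Fin n)) :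
    Prop :=
  ∃ δ > (0:ℝ), ∃ M > (0:ℝ),
    ∀ x ∈ (Metric.closedBall xbar δ ∩ C) \ {xbar},
      ∀ v ∈ normalCone C x, ‖v‖ = 1 →
        0 ≤ -⟪v, xbar - x⟫ ∧ -⟪v, xbar - x⟫ ≤ M * ‖xbar - x‖ ^ 2


/-!
Near `xbar` the constraint qualification holds in the quantitative form
`∑ ‖w l‖ ≤ c * ‖∑ w l‖` for normals `w l` to `K l` at points close to `xbar` (a compactness
argument). A quadratic penalty, minimizing `-⟪v, y⟫ + ‖y - x‖² / 2 + t / 2 * ∑ d(y, K l)²` and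
letting `t → ∞`, then writes every normal `v` to `⋂ K l` at a point `x` near `xbar` as `∑ w l`
with `w l` normal to `K l` at `x` and `∑ ‖w l‖ ≤ c * ‖v‖`. Adding up the SOSH estimates
`-⟪w l, xbar - x⟫ ≤ M l * ‖w l‖ * ‖xbar - x‖²` gives the estimate for the intersection.
-/
open Metric Filter Topology

section

variable {n : ℕ}

theorem smul_mem_normalCone {C : Set (EuclideanSpace ℝ (Fin n))} {x v : EuclideanSpace ℝ (Fin n)}
    (hv : v ∈ normalCone C x) {a : ℝ} (ha : 0 ≤ a) : a • v ∈ normalCone C x := fun y hy => by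
  rw [real_inner_smul_left]
  exact mul_nonpos_of_nonneg_of_nonpos ha (hv y hy)

theorem isClosed_normalCone_graph (C : Set (EuclideanSpace ℝ (Fin n))) :
    IsClosed
      {z : EuclideanSpace ℝ (Fin n) × EuclideanSpace ℝ (Fin n) | z.2 ∈ normalCone C z.1} := by
  have hgraph : {z : EuclideanSpace ℝ (Fin n) × EuclideanSpace ℝ (Fin n) | z.2 ∈ normalCone C z.1} =
      ⋂ y ∈ C, {z | ⟪z.2, y - z.1⟫ ≤ 0} := by
    ext; simp [normalCone]
  rw [hgraph]
  exact isClosed_biInter fun y _ => isClosed_le (by fun_prop) continuous_const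

theorem SOSH_iff_eventually {C : Set (EuclideanSpace ℝ (Fin n))} {xbar : EuclideanSpace ℝ (Fin n)}
    (hxbar : xbar ∈ C) :
    SOSH C xbar ↔ ∃ M ≥ 0, ∀ᶠ x in 𝓝 xbar, x ∈ C →
      ∀ v ∈ normalCone C x, -⟪v, xbar - x⟫ ≤ M * ‖v‖ * ‖xbar - x‖ ^ 2 := by
  constructor
  · rintro ⟨δ, hδ, M, hM, hsosh⟩
    refine ⟨M, hM.le, ?_⟩
    filter_upwards [closedBall_mem_nhds xbar hδ] with x hxδ hxC v hv
    rcases eq_or_ne x xbar with rfl | hx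
    · simp
    rcases eq_or_ne v 0 with rfl | hv0
    · simp
    have hunit := (hsosh x ⟨⟨hxδ, hxC⟩, hx⟩ _
      (smul_mem_normalCone hv (inv_nonneg.2 (norm_nonneg v))) (norm_smul_inv_norm hv0)).2
    rw [real_inner_smul_left] at hunit
    calc -⟪v, xbar - x⟫ = ‖v‖ * -(‖v‖⁻¹ * ⟪v, xbar - x⟫) := by field_simp
      _ ≤ ‖v‖ * (M * ‖xbar - x‖ ^ 2) := by gcongr
      _ = M * ‖v‖ * ‖xbar - x‖ ^ 2 := by ring
  · rintro ⟨M, hM, hev⟩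
    obtain ⟨δ, hδ, hball⟩ := nhds_basis_closedBall.eventually_iff.1 hev
    refine ⟨δ, hδ, M + 1, by positivity, ?_⟩
    rintro x ⟨⟨hxδ, hxC⟩, -⟩ v hv hv1
    have hbound := hball hxδ hxC v hv
    rw [hv1, mul_one] at hbound
    exact ⟨by linarith [hv xbar hxbar], by nlinarith [sq_nonneg ‖xbar - x‖]⟩

theorem smul_sum_sub_eq_of_forall_le {F ι : Type*} [NormedAddCommGroup F]
    [InnerProductSpace ℝ F] [Fintype ι] {x v y : F} {q : ι → F} {t : ℝ}
    (hmin : ∀ z, -⟪v, y⟫ + ‖y - x‖ ^ 2 / 2 + t / 2 * ∑ l, ‖y - q l‖ ^ 2 ≤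
      -⟪v, z⟫ + ‖z - x‖ ^ 2 / 2 + t / 2 * ∑ l, ‖z - q l‖ ^ 2) :
    t • ∑ l, (y - q l) = v - (y - x) := by
  set g := t • ∑ l, (y - q l) - (v - (y - x))
  have hderiv : ∀ h, HasDerivAt (fun s : ℝ => -⟪v, y + s • h⟫ + ‖y + s • h - x‖ ^ 2 / 2 +
      t / 2 * ∑ l, ‖y + s • h - q l‖ ^ 2) ⟪g, h⟫ 0 := fun h => by
    have hline : HasDerivAt (fun s : ℝ => y + s • h) h 0 := by
      simpa using ((hasDerivAt_id (0 : ℝ)).smul_const h).const_add y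
    refine ((((hasDerivAt_const (0 : ℝ) v).inner ℝ hline).fun_neg.fun_add
      ((hline.sub_const x).norm_sq.div_const 2)).fun_add
      ((HasDerivAt.fun_sum (u := Finset.univ) fun l _ =>
        (hline.sub_const (q l)).norm_sq).const_mul (t / 2))).congr_deriv ?_
    simp only [g, zero_smul, add_zero, inner_zero_left, inner_sub_left, sum_inner,
      real_inner_smul_left, ← Finset.mul_sum]
    ring
  have hg : ∀ h, ⟪g, h⟫ = 0 := fun h =>
    IsLocalMin.hasDerivAt_eq_zero (Eventually.of_forall fun s => by simpa using hmin _) (hderiv h)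
  exact sub_eq_zero.1 (inner_self_eq_zero.1 (hg g))

variable {ι : Type*} [Fintype ι] {K : ι → Set (EuclideanSpace ℝ (Fin n))}
  {xbar x v : EuclideanSpace ℝ (Fin n)}

theorem exists_pos_le_norm_sum_add_dist_of_qualification
    (hCQ : ∀ v : ι → EuclideanSpace ℝ (Fin n),
      (∀ l, v l ∈ normalCone (K l) xbar) → ∑ l, v l = 0 → ∀ l, v l = 0) :
    ∃ m > 0, ∀ p u : ι → EuclideanSpace ℝ (Fin n), (∀ l, u l ∈ normalCone (K l) (p l)) →
      ∑ l, ‖u l‖ = 1 → dist p (fun _ => xbar) ≤ 1 → m ≤ ‖∑ l, u l‖ + dist p (fun _ => xbar) := by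
  set T : Set ((ι → EuclideanSpace ℝ (Fin n)) × (ι → EuclideanSpace ℝ (Fin n))) :=
    {z | ∀ l, z.2 l ∈ normalCone (K l) (z.1 l)} ∩ {z | ∑ l, ‖z.2 l‖ = 1} ∩
      closedBall (fun _ => xbar) 1 ×ˢ closedBall 0 1
  have hT : IsCompact T := by
    refine (isCompact_closedBall _ _ |>.prod (isCompact_closedBall _ _)).inter_left
      (IsClosed.inter ?_ (isClosed_eq (by fun_prop) continuous_const))
    rw [Set.ofPred_forall]
    exact isClosed_iInter fun l => (isClosed_normalCone_graph (K l)).preimage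
      (f := fun z : (ι → EuclideanSpace ℝ (Fin n)) × (ι → EuclideanSpace ℝ (Fin n)) =>
        (z.1 l, z.2 l)) (by fun_prop)
  have hpos : ∀ z ∈ T, 0 < ‖∑ l, z.2 l‖ + dist z.1 (fun _ => xbar) := by
    rintro ⟨p, u⟩ ⟨⟨hu, hu1⟩, -⟩
    by_contra! hle
    have hp : p = fun _ => xbar := dist_le_zero.1 (by linarith [norm_nonneg (∑ l, u l)])
    have hsum : ∑ l, u l = 0 :=
      norm_le_zero_iff.1 (by linarith [dist_nonneg (x := p) (y := fun _ => xbar)])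
    subst hp
    have hu0 := hCQ u hu hsum
    have hu1' : ∑ l, ‖u l‖ = 1 := hu1
    simp only [hu0, norm_zero, Finset.sum_const_zero] at hu1'
    exact zero_ne_one hu1'
  obtain ⟨m, hm, hmT⟩ := hT.exists_forall_le' (by fun_prop) hpos
  refine ⟨m, hm, fun p u hu hu1 hp => hmT (p, u) ⟨⟨hu, hu1⟩, hp, ?_⟩⟩
  refine mem_closedBall_zero_iff.2 <| (pi_norm_le_iff_of_nonneg zero_le_one).2 fun l => ?_
  exact hu1 ▸ Finset.single_le_sum (fun j _ => norm_nonneg (u j)) (Finset.mem_univ l)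

theorem exists_sum_norm_le_of_qualification
    (hCQ : ∀ v : ι → EuclideanSpace ℝ (Fin n),
      (∀ l, v l ∈ normalCone (K l) xbar) → ∑ l, v l = 0 → ∀ l, v l = 0) :
    ∃ δ > 0, ∃ c ≥ 0, ∀ p w : ι → EuclideanSpace ℝ (Fin n), (∀ l, dist (p l) xbar ≤ δ) →
      (∀ l, w l ∈ normalCone (K l) (p l)) → ∑ l, ‖w l‖ ≤ c * ‖∑ l, w l‖ := by
  obtain ⟨m, hm, hbound⟩ := exists_pos_le_norm_sum_add_dist_of_qualification hCQ
  refine ⟨min 1 (m / 2), by positivity, 2 / m, by positivity, fun p w hp hw => ?_⟩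
  rcases (by positivity : 0 ≤ ∑ l, ‖w l‖).eq_or_lt with hs | hs
  · rw [← hs]; positivity
  set s := ∑ l, ‖w l‖
  have hpδ : dist p (fun _ => xbar) ≤ min 1 (m / 2) := (dist_pi_le_iff (by positivity)).2 hp
  have hnormalized := hbound p (s⁻¹ • w) (fun l => smul_mem_normalCone (hw l) (by positivity))
    (by simp only [Pi.smul_apply, norm_smul, norm_inv, Real.norm_eq_abs, abs_of_pos hs,
      ← Finset.mul_sum]; exact inv_mul_cancel₀ hs.ne')
    (hpδ.trans (min_le_left _ _))
  simp only [Pi.smul_apply, ← Finset.smul_sum, norm_smul, norm_inv, Real.norm_eq_abs,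
    abs_of_pos hs] at hnormalized
  have hhalf : m / 2 ≤ s⁻¹ * ‖∑ l, w l‖ := by linarith [hpδ.trans (min_le_right _ _)]
  rw [le_inv_mul_iff₀ hs] at hhalf
  rw [div_mul_eq_mul_div, le_div_iff₀ hm]
  linarith

theorem exists_penalized_projection (hclosed : ∀ l, IsClosed (K l)) (hconv : ∀ l, Convex ℝ (K l))
    (hx : ∀ l, x ∈ K l) {t : ℝ} (ht : 0 < t) :
    ∃ y : EuclideanSpace ℝ (Fin n), ∃ q : ι → EuclideanSpace ℝ (Fin n),
      (∀ l, q l ∈ K l) ∧ (∀ l, y - q l ∈ normalCone (K l) (q l)) ∧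
      (∀ l, ‖y - q l‖ ≤ ‖y - x‖) ∧ ‖y - x‖ ^ 2 ≤ 2 * ⟪v, y - x⟫ ∧
      t • ∑ l, (y - q l) = v - (y - x) := by
  set φ : EuclideanSpace ℝ (Fin n) → ℝ :=
    fun z => -⟪v, z⟫ + ‖z - x‖ ^ 2 / 2 + t / 2 * ∑ l, infDist z (K l) ^ 2
  have hpen : ∀ z, 0 ≤ t / 2 * ∑ l, infDist z (K l) ^ 2 := fun z => by positivity
  have hφx : φ x = -⟪v, x⟫ := by simp [φ, infDist_zero_of_mem (hx _)]
  have hφ_sub : ∀ z, ‖z - x‖ ^ 2 / 2 - ⟪v, z - x⟫ ≤ φ z - φ x := fun z => by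
    rw [hφx, inner_sub_right]; simp only [φ]; linarith [hpen z]
  have hcoercive : ∀ᶠ z in cocompact _, φ x ≤ φ z := by
    filter_upwards [(isCompact_closedBall x (2 * ‖v‖)).compl_mem_cocompact] with z hz
    rw [Set.mem_compl_iff, mem_closedBall, dist_eq_norm, not_le] at hz
    nlinarith [hφ_sub z, real_inner_le_norm v (z - x), norm_nonneg v]
  obtain ⟨y, hy⟩ := (by fun_prop : Continuous φ).exists_forall_le' x hcoercive
  choose q hqK hq using fun l =>
    exists_norm_eq_iInf_of_complete_convex ⟨x, hx l⟩ (hclosed l).isComplete (hconv l) y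
  have hq_infDist : ∀ l, ‖y - q l‖ = infDist y (K l) := fun l => by
    rw [hq l, infDist_eq_iInf]
    simp only [dist_eq_norm]
  refine ⟨y, q, hqK, fun l => (norm_eq_iInf_iff_real_inner_le_zero (hconv l) (hqK l)).1 (hq l),
    fun l => ?_, ?_, ?_⟩
  · rw [hq_infDist, ← dist_eq_norm]
    exact infDist_le_dist_of_mem (hx l)
  · linarith [hφ_sub y, hy x]
  -- `y` also minimizes the smooth majorant obtained by replacing `infDist z (K l)` with
  -- `‖z - q l‖`, which touches the penalty at `y`
  refine smul_sum_sub_eq_of_forall_le fun z => ?_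
  have hψy : φ y = -⟪v, y⟫ + ‖y - x‖ ^ 2 / 2 + t / 2 * ∑ l, ‖y - q l‖ ^ 2 := by
    simp only [φ, hq_infDist]
  have hφψ : φ z ≤ -⟪v, z⟫ + ‖z - x‖ ^ 2 / 2 + t / 2 * ∑ l, ‖z - q l‖ ^ 2 := by
    simp only [φ]
    gcongr with l
    · exact infDist_nonneg
    · rw [← dist_eq_norm]; exact infDist_le_dist_of_mem (hqK l)
  linarith [hy z]

theorem exists_bounded_approx_decomposition (hclosed : ∀ l, IsClosed (K l))
    (hconv : ∀ l, Convex ℝ (K l)) {δ c : ℝ} (hc : 0 ≤ c)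
    (hqual : ∀ p w : ι → EuclideanSpace ℝ (Fin n), (∀ l, dist (p l) xbar ≤ δ) →
      (∀ l, w l ∈ normalCone (K l) (p l)) → ∑ l, ‖w l‖ ≤ c * ‖∑ l, w l‖)
    (hxK : ∀ l, x ∈ K l) (hx : dist x xbar ≤ δ / 2) (hvδ : ‖v‖ ≤ δ / 8) {t : ℝ} (ht : 0 < t) :
    ∃ y : EuclideanSpace ℝ (Fin n), ∃ q w : ι → EuclideanSpace ℝ (Fin n),
      (∀ l, q l ∈ K l) ∧ (∀ l, w l ∈ normalCone (K l) (q l)) ∧ (∀ l, q l = y - t⁻¹ • w l) ∧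
      ‖y - x‖ ^ 2 ≤ 2 * ⟪v, y - x⟫ ∧ ∑ l, w l = v - (y - x) ∧
      ‖y - x‖ ≤ 2 * ‖v‖ ∧ ∑ l, ‖w l‖ ≤ c * (3 * ‖v‖) := by
  obtain ⟨y, q, hqK, hqN, hqy, hyx, hstat⟩ :=
    exists_penalized_projection hclosed hconv hxK (v := v) ht
  have hyx' : ‖y - x‖ ≤ 2 * ‖v‖ := by
    nlinarith [real_inner_le_norm v (y - x), norm_nonneg (y - x), norm_nonneg v]
  have hwsum : ∑ l, t • (y - q l) = v - (y - x) := by rw [← Finset.smul_sum, hstat]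
  refine ⟨y, q, fun l => t • (y - q l), hqK, fun l => smul_mem_normalCone (hqN l) ht.le,
    fun l => by rw [inv_smul_smul₀ ht.ne', sub_sub_cancel], hyx, hwsum, hyx', ?_⟩
  refine (hqual q _ (fun l => ?_) (fun l => smul_mem_normalCone (hqN l) ht.le)).trans ?_
  · calc dist (q l) xbar ≤ dist (q l) y + dist y x + dist x xbar := dist_triangle4 _ _ _ _
      _ ≤ δ := by
        rw [dist_comm, dist_eq_norm, dist_eq_norm]
        linarith [hqy l]
  · rw [hwsum]
    gcongr
    linarith [norm_sub_le v (y - x)]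

theorem exists_eq_sum_mem_normalCone_of_norm_le (hclosed : ∀ l, IsClosed (K l))
    (hconv : ∀ l, Convex ℝ (K l)) {δ c : ℝ} (hc : 0 ≤ c)
    (hqual : ∀ p w : ι → EuclideanSpace ℝ (Fin n), (∀ l, dist (p l) xbar ≤ δ) →
      (∀ l, w l ∈ normalCone (K l) (p l)) → ∑ l, ‖w l‖ ≤ c * ‖∑ l, w l‖)
    (hxK : ∀ l, x ∈ K l) (hx : dist x xbar ≤ δ / 2) (hv : v ∈ normalCone (⋂ l, K l) x)
    (hvδ : ‖v‖ ≤ δ / 8) :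
    ∃ w : ι → EuclideanSpace ℝ (Fin n), (∀ l, w l ∈ normalCone (K l) x) ∧ ∑ l, w l = v := by
  choose y q w hqK hwN hqw hyx hwsum hyx' hwbound using fun k : ℕ =>
    exists_bounded_approx_decomposition hclosed hconv hc hqual hxK hx hvδ (Nat.cast_add_one_pos k)
  have hmem : ∀ k, (y k, w k) ∈ closedBall x (2 * ‖v‖) ×ˢ closedBall 0 (c * (3 * ‖v‖)) := fun k =>
    ⟨by rw [mem_closedBall, dist_eq_norm]; exact hyx' k,
      mem_closedBall_zero_iff.2 <| (pi_norm_le_iff_of_nonneg (by positivity)).2 fun l =>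
        (Finset.single_le_sum (fun j _ => norm_nonneg (w k j)) (Finset.mem_univ l)).trans
          (hwbound k)⟩
  obtain ⟨⟨y₀, w₀⟩, -, φ, hφ, hlim⟩ :=
    tendsto_subseq_of_bounded (isBounded_closedBall.prod isBounded_closedBall) hmem
  have hy : Tendsto (fun k => y (φ k)) atTop (𝓝 y₀) := hlim.fst_nhds
  have hw : ∀ l, Tendsto (fun k => w (φ k) l) atTop (𝓝 (w₀ l)) := fun l =>
    tendsto_pi_nhds.1 hlim.snd_nhds l
  have hq : ∀ l, Tendsto (fun k => q (φ k) l) atTop (𝓝 y₀) := fun l => by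
    have hinv := (tendsto_one_div_add_atTop_nhds_zero_nat (𝕜 := ℝ)).comp hφ.tendsto_atTop
    simpa only [hqw, Function.comp_apply, one_div, zero_smul, sub_zero] using
      hy.sub (hinv.smul (hw l))
  have hy₀ : y₀ = x := by
    have hy₀K : y₀ ∈ ⋂ l, K l := Set.mem_iInter.2 fun l =>
      (hclosed l).mem_of_tendsto (hq l) (Eventually.of_forall fun k => hqK _ l)
    have hsq : ‖y₀ - x‖ ^ 2 ≤ 2 * ⟪v, y₀ - x⟫ :=
      (isClosed_le (f := fun z => ‖z - x‖ ^ 2) (g := fun z => 2 * ⟪v, z - x⟫) (by fun_prop)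
        (by fun_prop)).mem_of_tendsto hy (Eventually.of_forall fun k => hyx (φ k))
    have hsq' : ‖y₀ - x‖ ^ 2 ≤ 0 := by linarith [hv y₀ hy₀K]
    rwa [sq_nonpos_iff, norm_eq_zero, sub_eq_zero] at hsq'
  subst hy₀
  refine ⟨w₀, fun l => ?_, ?_⟩
  · exact (isClosed_normalCone_graph (K l)).mem_of_tendsto ((hq l).prodMk_nhds (hw l))
      (Eventually.of_forall fun k => hwN _ l)
  · refine tendsto_nhds_unique (tendsto_finsetSum Finset.univ fun l _ => hw l) ?_
    simpa only [hwsum, sub_self, sub_zero] using tendsto_const_nhds.sub (hy.sub_const y₀)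

theorem exists_eq_sum_mem_normalCone (hclosed : ∀ l, IsClosed (K l))
    (hconv : ∀ l, Convex ℝ (K l)) {δ c : ℝ} (hδ : 0 < δ) (hc : 0 ≤ c)
    (hqual : ∀ p w : ι → EuclideanSpace ℝ (Fin n), (∀ l, dist (p l) xbar ≤ δ) →
      (∀ l, w l ∈ normalCone (K l) (p l)) → ∑ l, ‖w l‖ ≤ c * ‖∑ l, w l‖)
    (hxK : ∀ l, x ∈ K l) (hx : dist x xbar ≤ δ / 2) (hv : v ∈ normalCone (⋂ l, K l) x) :
    ∃ w : ι → EuclideanSpace ℝ (Fin n), (∀ l, w l ∈ normalCone (K l) x) ∧ ∑ l, w l = v := by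
  set ε := δ / (8 * (‖v‖ + 1))
  have hε : 0 < ε := by positivity
  have hεv : ‖ε • v‖ ≤ δ / 8 := by
    rw [norm_smul, Real.norm_of_nonneg hε.le, div_mul_eq_mul_div, div_le_div_iff₀ (by positivity)
      (by positivity)]
    nlinarith [norm_nonneg v]
  obtain ⟨w, hw, hsum⟩ := exists_eq_sum_mem_normalCone_of_norm_le hclosed hconv hc hqual hxK hx
    (smul_mem_normalCone hv hε.le) hεv
  refine ⟨ε⁻¹ • w, fun l => smul_mem_normalCone (hw l) (by positivity), ?_⟩
  simp only [Pi.smul_apply, ← Finset.smul_sum, hsum, smul_smul, inv_mul_cancel₀ hε.ne', one_smul]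

theorem eventually_exists_eq_sum_mem_normalCone (hclosed : ∀ l, IsClosed (K l))
    (hconv : ∀ l, Convex ℝ (K l))
    (hCQ : ∀ v : ι → EuclideanSpace ℝ (Fin n),
      (∀ l, v l ∈ normalCone (K l) xbar) → ∑ l, v l = 0 → ∀ l, v l = 0) :
    ∃ c ≥ 0, ∀ᶠ x in 𝓝 xbar, x ∈ ⋂ l, K l → ∀ v ∈ normalCone (⋂ l, K l) x,
      ∃ w : ι → EuclideanSpace ℝ (Fin n), (∀ l, w l ∈ normalCone (K l) x) ∧ ∑ l, w l = v ∧
        ∑ l, ‖w l‖ ≤ c * ‖v‖ := by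
  obtain ⟨δ, hδ, c, hc, hqual⟩ := exists_sum_norm_le_of_qualification hCQ
  refine ⟨c, hc, ?_⟩
  filter_upwards [closedBall_mem_nhds xbar (half_pos hδ)] with x hx hxK v hv
  obtain ⟨w, hw, rfl⟩ :=
    exists_eq_sum_mem_normalCone hclosed hconv hδ hc hqual (Set.mem_iInter.1 hxK) hx hv
  exact ⟨w, hw, rfl, hqual (fun _ => x) w (fun _ => hx.trans (half_le_self hδ.le)) hw⟩

end

/-- SOSH is preserved under intersection, under a constraint qualification. -/
theorem SOSH_intersection
    {n r : ℕ} (K : Fin r → Set (EuclideanSpace ℝ (Fin n)))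
    (hclosed : ∀ l, IsClosed (K l)) (hconv : ∀ l, Convex ℝ (K l))
    (xbar : EuclideanSpace ℝ (Fin n)) (hxbar : xbar ∈ ⋂ l, K l)
    (hsosh : ∀ l, SOSH (K l) xbar)
    (hCQ : ∀ v : Fin r → EuclideanSpace ℝ (Fin n),
      (∀ l, v l ∈ normalCone (K l) xbar) → ∑ l, v l = 0 → ∀ l, v l = 0) :
    SOSH (⋂ l, K l) xbar := by
  obtain ⟨c, hc, hdecomp⟩ := eventually_exists_eq_sum_mem_normalCone hclosed hconv hCQ
  choose M hM hMK using fun l => (SOSH_iff_eventually (Set.mem_iInter.1 hxbar l)).1 (hsosh l)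
  have hM0 : 0 ≤ ∑ j, M j := Finset.sum_nonneg fun j _ => hM j
  have hMsum : ∀ l, M l ≤ ∑ j, M j := fun l =>
    Finset.single_le_sum (fun j _ => hM j) (Finset.mem_univ l)
  rw [SOSH_iff_eventually hxbar]
  refine ⟨(∑ j, M j) * c, mul_nonneg hM0 hc, ?_⟩
  filter_upwards [hdecomp, eventually_all.2 hMK] with x hdec hMx hxK v hv
  obtain ⟨w, hw, rfl, hwc⟩ := hdec hxK v hv
  have hterm : ∀ l, -⟪w l, xbar - x⟫ ≤ (∑ j, M j) * ‖w l‖ * ‖xbar - x‖ ^ 2 := fun l =>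
    (hMx l (Set.mem_iInter.1 hxK l) (w l) (hw l)).trans (by gcongr; exact hMsum l)
  calc -⟪∑ l, w l, xbar - x⟫ = ∑ l, -⟪w l, xbar - x⟫ := by rw [sum_inner, Finset.sum_neg_distrib]
    _ ≤ ∑ l, (∑ j, M j) * ‖w l‖ * ‖xbar - x‖ ^ 2 := Finset.sum_le_sum fun l _ => hterm l
    _ = (∑ j, M j) * (∑ l, ‖w l‖) * ‖xbar - x‖ ^ 2 := by rw [Finset.mul_sum, Finset.sum_mul]
    _ ≤ (∑ j, M j) * c * ‖∑ l, w l‖ * ‖xbar - x‖ ^ 2 := by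
      rw [mul_assoc _ c]
      gcongr
end

section
/- Define f: ℝ → ℝ by f(x) = e^{-1/x} for x ∈ (0, 1/2], f(0) = 0, and f(x) = f(-x) for x ∈ [-1/2, 0). Then f is convex on [-1/2, 1/2], f⁻¹((-∞,0]) ∩ [-1/2,1/2] = {0}, and the Newton-type iteration x_{i+1} = x_i - f(x_i)/f'(x_i) = x_i - x_i² from any x_0 ∈ (0,1/2) produces a sequence converging to 0 with lim_{i→∞} |x_{i+1}|/|x_i| = 1 (so convergence is not linear). -/
/-!
`f = g ∘ |·|` with `g = expNegInvGlue`, which is continuous, monotone, and on `(0, 1/2)` has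
second derivative `e^{-1/x} (1 - 2x) / x⁴ ≥ 0`; so `g` is convex and monotone on `[0, 1/2]` and
`f` is convex on `[-1/2, 1/2]`. Since `f' = f / x²` on `(0, ∞)`, the Newton step is `x ↦ x - x²`,
which keeps `(0, 1)` invariant, decreases to its only fixed point `0`, and has ratio
`x_{i+1} / x_i = 1 - x_i → 1`.
-/

open Filter

/-- The example function `f(x) = e^{-1/|x|}` for `x ≠ 0`, `f(0) = 0`. -/
noncomputable def exampleF (x : ℝ) : ℝ := if x = 0 then 0 else Real.exp (-1 / |x|)

open Set Real

namespace expNegInvGlue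

theorem hasDerivAt_of_pos {x : ℝ} (hx : 0 < x) :
    HasDerivAt expNegInvGlue (expNegInvGlue x / x ^ 2) x := by
  have hexp : HasDerivAt (fun y : ℝ => exp (-y⁻¹)) (exp (-x⁻¹) * (x ^ 2)⁻¹) x := by
    simpa using ((hasDerivAt_inv hx.ne').neg).exp
  have hglue : ∀ {y : ℝ}, 0 < y → expNegInvGlue y = exp (-y⁻¹) := fun hy => if_neg hy.not_ge
  refine (hexp.congr_of_eventuallyEq ?_).congr_deriv ?_
  · filter_upwards [Ioi_mem_nhds hx] with y hy using hglue hy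
  · rw [hglue hx, div_eq_mul_inv]

theorem hasDerivAt_div_sq_of_pos {x : ℝ} (hx : 0 < x) :
    HasDerivAt (fun y => expNegInvGlue y / y ^ 2) (expNegInvGlue x * (1 - 2 * x) / x ^ 4) x := by
  refine ((hasDerivAt_of_pos hx).div (hasDerivAt_pow 2 x) (pow_ne_zero 2 hx.ne')).congr_deriv ?_
  field_simp
  ring

theorem convexOn_Icc_zero_half : ConvexOn ℝ (Icc 0 (1 / 2)) expNegInvGlue := by
  refine convexOn_of_hasDerivWithinAt2_nonneg (convex_Icc _ _)
    (expNegInvGlue.contDiff (n := 0)).continuous.continuousOn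
    (f' := fun y => expNegInvGlue y / y ^ 2)
    (f'' := fun y => expNegInvGlue y * (1 - 2 * y) / y ^ 4) ?_ ?_ ?_ <;>
    rw [interior_Icc] <;> rintro x ⟨hx₀, hx₁⟩
  · exact (hasDerivAt_of_pos hx₀).hasDerivWithinAt
  · exact (hasDerivAt_div_sq_of_pos hx₀).hasDerivWithinAt
  · have := nonneg x
    have : 0 ≤ 1 - 2 * x := by linarith
    positivity

end expNegInvGlue

theorem image_abs_Icc_neg {a : ℝ} (ha : 0 ≤ a) : (|·|) '' Icc (-a) a = Icc 0 a := by
  ext y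
  constructor
  · rintro ⟨z, hz, rfl⟩
    exact ⟨abs_nonneg z, abs_le.2 hz⟩
  · rintro ⟨hy₀, hya⟩
    exact ⟨y, ⟨by linarith, hya⟩, abs_of_nonneg hy₀⟩

theorem exampleF_eq_comp_abs : exampleF = expNegInvGlue ∘ (|·|) := by
  funext x
  rcases eq_or_ne x 0 with rfl | hx
  · simp [exampleF]
  · simp [exampleF, expNegInvGlue, hx, neg_div]

theorem exampleF_convexOn : ConvexOn ℝ (Icc (-(1 / 2)) (1 / 2)) exampleF := by
  have himage := image_abs_Icc_neg (a := (1 / 2 : ℝ)) (by norm_num)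
  rw [exampleF_eq_comp_abs]
  refine ConvexOn.comp ?_ (convexOn_norm (convex_Icc _ _)) ?_
  · rw [himage]
    exact expNegInvGlue.convexOn_Icc_zero_half
  · exact expNegInvGlue.monotone.monotoneOn _

theorem exampleF_nonpos_iff {z : ℝ} : exampleF z ≤ 0 ↔ z = 0 := by
  rw [exampleF_eq_comp_abs, Function.comp_apply, (expNegInvGlue.nonneg _).ge_iff_eq',
    expNegInvGlue.zero_iff_nonpos, abs_nonpos_iff]

theorem hasDerivAt_exampleF_of_pos {z : ℝ} (hz : 0 < z) :
    HasDerivAt exampleF (exampleF z / z ^ 2) z := by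
  have hpos : ∀ {y : ℝ}, 0 < y → exampleF y = expNegInvGlue y := fun hy => by
    rw [exampleF_eq_comp_abs, Function.comp_apply, abs_of_pos hy]
  rw [hpos hz]
  refine (expNegInvGlue.hasDerivAt_of_pos hz).congr_of_eventuallyEq ?_
  filter_upwards [Ioi_mem_nhds hz] with y hy using hpos hy

theorem exampleF_div_deriv_of_pos {z : ℝ} (hz : 0 < z) :
    exampleF z / deriv exampleF z = z ^ 2 := by
  have hne : exampleF z ≠ 0 := fun h => hz.ne' (exampleF_nonpos_iff.1 h.le)
  rw [(hasDerivAt_exampleF_of_pos hz).deriv, div_div_cancel₀ hne]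

section StepSubSq

variable {x : ℕ → ℝ}

theorem mem_Ioo_of_step_sub_sq (hiter : ∀ i, x (i + 1) = x i - x i ^ 2) (hx0 : x 0 ∈ Ioo 0 1)
    (i : ℕ) : x i ∈ Ioo 0 1 := by
  induction i with
  | zero => exact hx0
  | succ i ih =>
    obtain ⟨h₀, h₁⟩ := ih
    rw [hiter i]
    constructor <;> nlinarith

theorem tendsto_zero_of_step_sub_sq (hiter : ∀ i, x (i + 1) = x i - x i ^ 2)
    (hx0 : x 0 ∈ Ioo 0 1) : Tendsto x atTop (nhds 0) := by
  have hanti : Antitone x :=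
    antitone_nat_of_succ_le fun i => by rw [hiter i]; nlinarith
  have hbdd : BddBelow (range x) :=
    ⟨0, by rintro _ ⟨i, rfl⟩; exact (mem_Ioo_of_step_sub_sq hiter hx0 i).1.le⟩
  have hL := tendsto_atTop_ciInf hanti hbdd
  set L := ⨅ i, x i
  have hfix : L = L - L ^ 2 :=
    tendsto_nhds_unique (hL.comp (tendsto_add_atTop_nat 1))
      ((hL.sub (hL.pow 2)).congr fun i => (hiter i).symm)
  have hL0 : L = 0 := pow_eq_zero_iff two_ne_zero |>.1 (by linarith)
  rwa [hL0] at hL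

theorem tendsto_abs_ratio_of_step_sub_sq (hiter : ∀ i, x (i + 1) = x i - x i ^ 2)
    (hx0 : x 0 ∈ Ioo 0 1) :
    Tendsto (fun i => |x (i + 1)| / |x i|) atTop (nhds 1) := by
  have hratio : ∀ i, 1 - x i = |x (i + 1)| / |x i| := fun i => by
    have hi := (mem_Ioo_of_step_sub_sq hiter hx0 i).1
    rw [abs_of_pos (mem_Ioo_of_step_sub_sq hiter hx0 (i + 1)).1, abs_of_pos hi, hiter i]
    field_simp
  simpa using (tendsto_const_nhds.sub (tendsto_zero_of_step_sub_sq hiter hx0)).congr hratio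

end StepSubSq

/-- The condition `0 ∉ ∂f(x̄)` is essential: for `f(x) = e^{-1/|x|}` the
Newton-type iteration `x_{i+1} = x_i - f(x_i)/f'(x_i) = x_i - x_i²` converges
to `0` but not linearly. -/
theorem no_linear_convergence_example
    (x : ℕ → ℝ) (hx0 : x 0 ∈ Set.Ioo (0:ℝ) (1/2))
    (hiter : ∀ i, x (i + 1) = x i - (x i) ^ 2) :
    ConvexOn ℝ (Set.Icc (-(1/2) : ℝ) (1/2)) exampleF ∧
    {z ∈ Set.Icc (-(1/2) : ℝ) (1/2) | exampleF z ≤ 0} = {0} ∧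
    (∀ z ∈ Set.Ioo (0:ℝ) (1/2), exampleF z / deriv exampleF z = z ^ 2) ∧
    Tendsto x atTop (nhds 0) ∧
    Tendsto (fun i => |x (i + 1)| / |x i|) atTop (nhds 1) := by
  have hx0' : x 0 ∈ Ioo 0 1 := ⟨hx0.1, hx0.2.trans (by norm_num)⟩
  refine ⟨exampleF_convexOn, ?_, fun z hz => exampleF_div_deriv_of_pos hz.1,
    tendsto_zero_of_step_sub_sq hiter hx0', tendsto_abs_ratio_of_step_sub_sq hiter hx0'⟩
  ext z
  simp only [mem_ofPred_eq, mem_singleton_iff, exampleF_nonpos_iff]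
  constructor
  · exact And.right
  · rintro rfl
    norm_num
end
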